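/- Suppose the partition has spectral gap at least Λ > 0, and let ω > 0 and α > 0 satisfy γ = ((1+α)/α)·(ω/Λ) < 1. Let m = 2^l for some l = 0, 1, 2, ..., let f ∈ PW_ω(L), and let S : V → ℂ satisfy ∑_{v∈Ω_j} S(v) = ∑_{v∈Ω_j} f(v) for every j and ‖L^m S‖ ≤ ‖L^m u‖ for every u : V → ℂ with ∑_{v∈Ω_j} u(v) = ∑_{v∈Ω_j} f(v) for every j. Then ‖f − S‖ ≤ 2·γ^m·‖f‖. -/

import Mathlib

/-!
Write `g = f - S`. Both `f` and `S` have the prescribed block sums, so `g` has zero sum on every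
block and the spectral gap gives `Λ ‖g‖ ≤ ‖L g‖`. For the self-adjoint `L`,
`‖L^m g‖² = ⟪g, L^{2m} g⟫ ≤ ‖g‖ ‖L^{2m} g‖`, so repeated squaring upgrades this to
`Λ^m ‖g‖ ≤ ‖L^m g‖` when `m` is a power of two. On the other side, `‖L^m S‖ ≤ ‖L^m f‖` by
minimality and `‖L^m f‖ ≤ ω^m ‖f‖` for `f ∈ PW_ω(L)`, so `‖L^m g‖ ≤ 2 ω^m ‖f‖`. Hence
`‖f - S‖ ≤ 2 (ω/Λ)^m ‖f‖ ≤ 2 γ^m ‖f‖`.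
-/

open Finset

theorem Module.End.pow_apply_of_mem_eigenspace {R M : Type*} [CommRing R] [AddCommGroup M]
    [Module R M] {f : Module.End R M} {μ : R} {x : M} (hx : x ∈ f.eigenspace μ) (k : ℕ) :
    (f ^ k) x = μ ^ k • x := by
  induction k with
  | zero => simp
  | succ k ih => rw [pow_succ', Module.End.mul_apply, ih, map_smul,
      Module.End.mem_eigenspace_iff.mp hx, smul_smul, pow_succ]

section InnerProductSpace

open Module.End

variable {𝕜 E : Type*} [RCLike 𝕜] [NormedAddCommGroup E] [InnerProductSpace 𝕜 E]

def paleyWiener (T : E →ₗ[𝕜] E) (ω : ℝ) : Submodule 𝕜 E :=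
  ⨆ c : Set.Icc (0 : ℝ) ω, eigenspace T (c : 𝕜)

namespace LinearMap.IsSymmetric

variable {T : E →ₗ[𝕜] E}

theorem norm_pow_apply_sq_le (hT : T.IsSymmetric) (x : E) (m : ℕ) :
    ‖(T ^ m) x‖ ^ 2 ≤ ‖x‖ * ‖(T ^ (2 * m)) x‖ := by
  have hinner : inner 𝕜 ((T ^ m) x) ((T ^ m) x) = inner 𝕜 x ((T ^ (2 * m)) x) := by
    rw [hT.pow m, ← mul_apply, ← pow_add, two_mul]
  rw [← inner_self_eq_norm_sq (𝕜 := 𝕜), hinner]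
  exact re_inner_le_norm _ _

theorem pow_two_pow_mul_norm_le (hT : T.IsSymmetric) {Λ : ℝ} (hΛ : 0 ≤ Λ) {x : E}
    (hx : Λ * ‖x‖ ≤ ‖T x‖) (l : ℕ) : Λ ^ 2 ^ l * ‖x‖ ≤ ‖(T ^ 2 ^ l) x‖ := by
  induction l with
  | zero => simpa using hx
  | succ l ih =>
    rcases (norm_nonneg x).eq_or_lt with hx0 | hx0
    · simp [← hx0]
    have hsq : Λ ^ 2 ^ (l + 1) * ‖x‖ ^ 2 ≤ ‖x‖ * ‖(T ^ 2 ^ (l + 1)) x‖ := calc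
      Λ ^ 2 ^ (l + 1) * ‖x‖ ^ 2 = (Λ ^ 2 ^ l * ‖x‖) ^ 2 := by ring
      _ ≤ ‖(T ^ 2 ^ l) x‖ ^ 2 := pow_le_pow_left₀ (by positivity) ih 2
      _ ≤ ‖x‖ * ‖(T ^ 2 ^ (l + 1)) x‖ := by
        rw [pow_succ 2 l, mul_comm _ 2]; exact hT.norm_pow_apply_sq_le x _
    nlinarith

theorem norm_pow_apply_le_of_mem_paleyWiener
    (hT : T.IsSymmetric) {ω : ℝ} (hω : 0 ≤ ω) {x : E} (hx : x ∈ paleyWiener T ω) (k : ℕ) :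
    ‖(T ^ k) x‖ ≤ ω ^ k * ‖x‖ := by
  classical
  obtain ⟨d, hd, rfl⟩ := (Submodule.mem_iSup_iff_exists_finsupp _ x).mp hx
  have horth := hT.orthogonalFamily_eigenspaces.comp
    (RCLike.ofReal_injective.comp Subtype.coe_injective : Function.Injective
      fun c : Set.Icc (0 : ℝ) ω => ((c : ℝ) : 𝕜))
  have hsum : ‖d.sum fun _ y => y‖ ^ 2 = ∑ c ∈ d.support, ‖d c‖ ^ 2 :=
    horth.norm_sum (fun c => ⟨d c, hd c⟩) d.support
  have hpow : ‖(T ^ k) (d.sum fun _ y => y)‖ ^ 2 =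
      ∑ c ∈ d.support, (|(c : ℝ)| ^ k) ^ 2 * ‖d c‖ ^ 2 := by
    rw [Finsupp.sum, map_sum, sum_congr rfl fun c _ => pow_apply_of_mem_eigenspace (hd c) k]
    have := horth.norm_sum (fun c => (⟨((c : ℝ) : 𝕜) ^ k • d c,
      Submodule.smul_mem _ _ (hd c)⟩ : eigenspace T ((c : ℝ) : 𝕜))) d.support
    simpa [norm_smul, mul_pow] using this
  refine (pow_le_pow_iff_left₀ (norm_nonneg _) (by positivity) two_ne_zero).mp ?_
  rw [hpow, mul_pow, hsum, mul_sum]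
  refine sum_le_sum fun c _ => ?_
  have hck : |(c : ℝ)| ^ k ≤ ω ^ k := by
    rw [abs_of_nonneg c.2.1]; exact pow_le_pow_left₀ c.2.1 c.2.2 k
  gcongr

end LinearMap.IsSymmetric

end InnerProductSpace

section Graph

variable {V : Type*} [Fintype V]

def graphLaplacian (w : V → V → ℝ) : EuclideanSpace ℂ V →ₗ[ℂ] EuclideanSpace ℂ V where
  toFun g := WithLp.toLp 2 fun x => ∑ y, (g x - g y) * (w x y : ℂ)
  map_add' g h := by
    ext x
    simp only [PiLp.add_apply, ← sum_add_distrib]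
    exact sum_congr rfl fun y _ => by ring
  map_smul' c g := by
    ext x
    simp only [PiLp.smul_apply, smul_eq_mul, RingHom.id_apply, mul_sum]
    exact sum_congr rfl fun y _ => by ring

theorem graphLaplacian_apply (w : V → V → ℝ) (g : EuclideanSpace ℂ V) (x : V) :
    graphLaplacian w g x = ∑ y, (g x - g y) * (w x y : ℂ) := rfl

noncomputable def dirichletForm (w : V → V → ℝ) (s : Finset V) (g : V → ℂ) : ℝ :=
  1 / 2 * ∑ u ∈ s, ∑ v ∈ s, ‖g u - g v‖ ^ 2 * w u v

/-- Under `u ↔ v`, `∑ᵤ∑ᵥ conj (g u - g v) g u w(u,v)` becomes the negative of the same sum with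
`g v` in place of `g u`; averaging the two gives the Dirichlet form. -/
theorem inner_graphLaplacian_self {w : V → V → ℝ} (hsymm : ∀ u v, w u v = w v u)
    (g : EuclideanSpace ℂ V) :
    inner ℂ (graphLaplacian w g) g = (dirichletForm w univ g : ℂ) := by
  set A := ∑ u, ∑ v, (starRingEnd ℂ) (g u - g v) * g u * (w u v : ℂ) with hAdef
  have hA : inner ℂ (graphLaplacian w g) g = A := by
    simp only [A, PiLp.inner_apply, graphLaplacian_apply, RCLike.inner_apply, map_sum, mul_sum,
      map_mul, Complex.conj_ofReal]
    exact sum_congr rfl fun u _ => sum_congr rfl fun v _ => by ring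
  have hswap : A = -∑ u, ∑ v, (starRingEnd ℂ) (g u - g v) * g v * (w u v : ℂ) := by
    rw [hAdef, sum_comm, ← sum_neg_distrib]
    refine sum_congr rfl fun u _ => ?_
    rw [← sum_neg_distrib]
    refine sum_congr rfl fun v _ => ?_
    rw [hsymm, map_sub, map_sub]
    ring
  have h2A : 2 * A = ∑ u, ∑ v, (‖g u - g v‖ : ℂ) ^ 2 * (w u v : ℂ) := by
    rw [two_mul]
    nth_rewrite 2 [hswap]
    rw [← sub_eq_add_neg, hAdef, ← sum_sub_distrib]
    refine sum_congr rfl fun u _ => ?_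
    rw [← sum_sub_distrib]
    refine sum_congr rfl fun v _ => ?_
    rw [← Complex.conj_mul']
    ring
  rw [hA, dirichletForm]
  push_cast
  linear_combination (1 / 2 : ℂ) * h2A

theorem isSymmetric_graphLaplacian {w : V → V → ℝ} (hsymm : ∀ u v, w u v = w v u) :
    (graphLaplacian w).IsSymmetric :=
  (LinearMap.isSymmetric_iff_inner_map_self_real _).mpr fun g => by
    rw [inner_graphLaplacian_self hsymm, Complex.conj_ofReal]

theorem dirichletForm_le_norm_mul_norm {w : V → V → ℝ} (hsymm : ∀ u v, w u v = w v u)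
    (g : EuclideanSpace ℂ V) : dirichletForm w univ g ≤ ‖graphLaplacian w g‖ * ‖g‖ := by
  simpa [inner_graphLaplacian_self hsymm] using re_inner_le_norm (𝕜 := ℂ) (graphLaplacian w g) g

section Partition

variable {J : Type*} [Fintype J] {w : V → V → ℝ} {Ω : J → Finset V}

theorem sum_sum_of_partition (hdisj : ∀ i j, i ≠ j → Disjoint (Ω i) (Ω j))
    (hcover : ∀ v, ∃ j, v ∈ Ω j) {M : Type*} [AddCommMonoid M] (F : V → M) :
    ∑ j, ∑ v ∈ Ω j, F v = ∑ v, F v := by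
  classical
  rw [← sum_biUnion fun i _ j _ hij => hdisj i j hij]
  congr
  ext v
  simpa using hcover v

theorem sum_dirichletForm_le (hnn : ∀ u v, 0 ≤ w u v)
    (hdisj : ∀ i j, i ≠ j → Disjoint (Ω i) (Ω j)) (hcover : ∀ v, ∃ j, v ∈ Ω j) (g : V → ℂ) :
    ∑ j, dirichletForm w (Ω j) g ≤ dirichletForm w univ g := by
  simp only [dirichletForm, ← mul_sum]
  rw [← sum_sum_of_partition hdisj hcover]
  gcongr with j _ u
  · exact fun v _ _ => mul_nonneg (sq_nonneg _) (hnn u v)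
  · exact subset_univ _

theorem mul_norm_sq_le_dirichletForm (hnn : ∀ u v, 0 ≤ w u v)
    (hdisj : ∀ i j, i ≠ j → Disjoint (Ω i) (Ω j)) (hcover : ∀ v, ∃ j, v ∈ Ω j) {Λ : ℝ}
    (hgap : ∀ j, ∀ g : V → ℂ, ∑ v ∈ Ω j, g v = 0 →
      Λ * ∑ v ∈ Ω j, ‖g v‖ ^ 2 ≤ dirichletForm w (Ω j) g)
    (g : EuclideanSpace ℂ V) (hg : ∀ j, ∑ v ∈ Ω j, g v = 0) :
    Λ * ‖g‖ ^ 2 ≤ dirichletForm w univ g := calc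
  Λ * ‖g‖ ^ 2 = ∑ j, Λ * ∑ v ∈ Ω j, ‖g v‖ ^ 2 := by
    rw [EuclideanSpace.norm_sq_eq, ← mul_sum, sum_sum_of_partition hdisj hcover]
  _ ≤ ∑ j, dirichletForm w (Ω j) g := sum_le_sum fun j _ => hgap j g (hg j)
  _ ≤ dirichletForm w univ g := sum_dirichletForm_le hnn hdisj hcover g

theorem mul_norm_le_norm_graphLaplacian (hsymm : ∀ u v, w u v = w v u)
    (hnn : ∀ u v, 0 ≤ w u v)
    (hdisj : ∀ i j, i ≠ j → Disjoint (Ω i) (Ω j)) (hcover : ∀ v, ∃ j, v ∈ Ω j) {Λ : ℝ}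
    (hgap : ∀ j, ∀ g : V → ℂ, ∑ v ∈ Ω j, g v = 0 →
      Λ * ∑ v ∈ Ω j, ‖g v‖ ^ 2 ≤ dirichletForm w (Ω j) g)
    (g : EuclideanSpace ℂ V) (hg : ∀ j, ∑ v ∈ Ω j, g v = 0) :
    Λ * ‖g‖ ≤ ‖graphLaplacian w g‖ := by
  rcases (norm_nonneg g).eq_or_lt with hg0 | hg0
  · simp [← hg0]
  have h := (mul_norm_sq_le_dirichletForm hnn hdisj hcover hgap g hg).trans
    (dirichletForm_le_norm_mul_norm hsymm g)
  exact le_of_mul_le_mul_right (by rwa [mul_assoc, ← pow_two]) hg0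

end Partition

theorem toLp_iterate (w : V → V → ℝ) (n : ℕ) (u : V → ℂ) :
    WithLp.toLp 2 ((fun g : V → ℂ => fun x => ∑ y, (g x - g y) * (w x y : ℂ))^[n] u) =
      (graphLaplacian w ^ n) (WithLp.toLp 2 u) := by
  rw [Module.End.coe_pow]
  exact Function.Semiconj.iterate_right (f := WithLp.toLp 2) (fun _ => rfl) n u

theorem toLp_mem_paleyWiener {w : V → V → ℝ} {ω : ℝ} {f : V → ℂ}
    (hf : f ∈ Submodule.span ℂ {g : V → ℂ | ∃ c : ℝ, 0 ≤ c ∧ c ≤ ω ∧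
      ∀ v, ∑ u, (g v - g u) * (w v u : ℂ) = (c : ℂ) * g v}) :
    WithLp.toLp 2 f ∈ paleyWiener (graphLaplacian w) ω := by
  refine Submodule.span_le.mpr ?_ <| Submodule.apply_mem_span_image_of_mem_span
    (WithLp.linearEquiv 2 ℂ (V → ℂ)).symm.toLinearMap hf
  rintro _ ⟨g, ⟨c, hc0, hcω, hg⟩, rfl⟩
  refine Submodule.mem_iSup_of_mem ⟨c, hc0, hcω⟩ (Module.End.mem_eigenspace_iff.mpr ?_)
  ext v
  exact hg v

end Graph

theorem stmt_14 {V : Type*} [Fintype V] {J : Type*} [Fintype J] (w : V → V → ℝ)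
    (hsymm : ∀ u v, w u v = w v u) (hnn : ∀ u v, 0 ≤ w u v)
    (Ω : J → Finset V)
    (hdisj : ∀ i j, i ≠ j → Disjoint (Ω i) (Ω j)) (hcover : ∀ v : V, ∃ j, v ∈ Ω j)
    (Λ : ℝ) (hΛ : 0 < Λ)
    (hgap : ∀ j, ∀ g : V → ℂ, ∑ v ∈ Ω j, g v = 0 →
      Λ * ∑ v ∈ Ω j, ‖g v‖ ^ 2 ≤
        1 / 2 * ∑ u ∈ Ω j, ∑ v ∈ Ω j, ‖g u - g v‖ ^ 2 * w u v)
    (ω α : ℝ) (hω : 0 < ω) (hα : 0 < α)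
    (l : ℕ)
    (f : V → ℂ)
    (hf : f ∈ Submodule.span ℂ {g : V → ℂ | ∃ c : ℝ, 0 ≤ c ∧ c ≤ ω ∧
      ∀ v, ∑ u, (g v - g u) * (w v u : ℂ) = (c : ℂ) * g v})
    (S : V → ℂ)
    (hSinterp : ∀ j, ∑ v ∈ Ω j, S v = ∑ v ∈ Ω j, f v)
    (hSmin : ∀ u : V → ℂ, (∀ j, ∑ v ∈ Ω j, u v = ∑ v ∈ Ω j, f v) →
      Real.sqrt (∑ v, ‖((fun g : V → ℂ => fun x => ∑ y, (g x - g y) * (w x y : ℂ))^[2 ^ l] S) v‖ ^ 2) ≤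
        Real.sqrt (∑ v, ‖((fun g : V → ℂ => fun x => ∑ y, (g x - g y) * (w x y : ℂ))^[2 ^ l] u) v‖ ^ 2)) :
    Real.sqrt (∑ v, ‖f v - S v‖ ^ 2) ≤
      2 * ((1 + α) / α * (ω / Λ)) ^ (2 ^ l) * Real.sqrt (∑ v, ‖f v‖ ^ 2) := by
  set L := graphLaplacian w
  have hL : L.IsSymmetric := isSymmetric_graphLaplacian hsymm
  set F : EuclideanSpace ℂ V := WithLp.toLp 2 f
  set G : EuclideanSpace ℂ V := WithLp.toLp 2 S
  set m := 2 ^ l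
  have hmin : ‖(L ^ m) G‖ ≤ ‖(L ^ m) F‖ := by
    rw [← toLp_iterate, ← toLp_iterate, EuclideanSpace.norm_eq, EuclideanSpace.norm_eq]
    exact hSmin f fun _ => rfl
  have hlow : Λ ^ m * ‖F - G‖ ≤ ‖(L ^ m) (F - G)‖ :=
    hL.pow_two_pow_mul_norm_le hΛ.le (mul_norm_le_norm_graphLaplacian hsymm hnn hdisj hcover
      hgap _ fun j => by simp [F, G, sum_sub_distrib, hSinterp]) l
  have hup : ‖(L ^ m) (F - G)‖ ≤ 2 * (ω ^ m * ‖F‖) := calc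
    _ ≤ ‖(L ^ m) F‖ + ‖(L ^ m) G‖ := by rw [map_sub]; exact norm_sub_le _ _
    _ ≤ 2 * ‖(L ^ m) F‖ := by linarith
    _ ≤ 2 * (ω ^ m * ‖F‖) := by
      gcongr
      exact hL.norm_pow_apply_le_of_mem_paleyWiener hω.le (toLp_mem_paleyWiener hf) m
  have hγ : ω / Λ ≤ (1 + α) / α * (ω / Λ) :=
    le_mul_of_one_le_left (by positivity) ((one_le_div hα).mpr (by linarith))
  calc Real.sqrt (∑ v, ‖f v - S v‖ ^ 2) = ‖F - G‖ := (EuclideanSpace.norm_eq (F - G)).symm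
    _ = Λ ^ m * ‖F - G‖ / Λ ^ m := by field_simp
    _ ≤ 2 * (ω ^ m * ‖F‖) / Λ ^ m := div_le_div_of_nonneg_right (hlow.trans hup) (by positivity)
    _ = 2 * (ω / Λ) ^ m * ‖F‖ := by rw [div_pow]; ring
    _ ≤ 2 * ((1 + α) / α * (ω / Λ)) ^ m * ‖F‖ := by gcongr
    _ = 2 * ((1 + α) / α * (ω / Λ)) ^ m * Real.sqrt (∑ v, ‖f v‖ ^ 2) :=
      congrArg _ (EuclideanSpace.norm_eq F)
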